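/- Let f be the Fibonacci sequence with f_0 = f_1 = 1. The infinite matrices F̂ = (f̂_{nk}) with f̂_{n,n−1} = −f_{n+1}/f_n, f̂_{nn} = f_n/f_{n+1}, f̂_{nk} = 0 otherwise, and G = (g_{nk}) with g_{nk} = f_{n+1}²/(f_k f_{k+1}) for 0 ≤ k ≤ n and 0 otherwise, are mutually inverse lower-triangular matrices: (F̂G)_{nm} = δ_{nm} and (GF̂)_{nm} = δ_{nm} for all n, m ∈ ℕ. -/

import Mathlib

open Filter Topology

def fibo : ℕ → ℕ
  | 0 => 1
  | 1 => 1
  | n + 2 => fibo (n + 1) + fibo n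

noncomputable def Fhat (x : ℕ → ℝ) : ℕ → ℝ
  | 0 => (fibo 0 : ℝ) / fibo 1 * x 0
  | k + 1 => (fibo (k + 1) : ℝ) / fibo (k + 2) * x (k + 1)
      - (fibo (k + 2) : ℝ) / fibo (k + 1) * x k

noncomputable def xseq (y : ℕ → ℝ) (k : ℕ) : ℝ :=
  ∑ j ∈ Finset.range (k + 1), ((fibo (k + 1) : ℝ) ^ 2 / ((fibo j : ℝ) * fibo (j + 1))) * y j

noncomputable def Fmat (n k : ℕ) : ℝ :=
  if k + 1 = n then -((fibo (n + 1) : ℝ) / fibo n)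
  else if k = n then (fibo n : ℝ) / fibo (n + 1)
  else 0

noncomputable def Gmat (n k : ℕ) : ℝ :=
  if k ≤ n then (fibo (n + 1) : ℝ) ^ 2 / ((fibo k : ℝ) * fibo (k + 1)) else 0


/-! With `c n = f n * f (n+1)` and `u n = f (n+1) ^ 2`, the two matrices factor as
`F̂ = diag c · (I - S) · diag u⁻¹` and `G = diag u · L · diag c⁻¹`, where `S` is the shift and `L`
the lower-triangular matrix of ones. Since `I - S` and `L` are mutually inverse (differencing
undoes partial summation), the diagonal factors cancel in both products. -/

lemma fibo_pos : ∀ n, 0 < fibo n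
  | 0 => Nat.one_pos
  | 1 => Nat.one_pos
  | n + 2 => Nat.add_pos_left (fibo_pos (n + 1)) _

lemma fibo_cast_ne_zero (n : ℕ) : (fibo n : ℝ) ≠ 0 :=
  Nat.cast_ne_zero.mpr (fibo_pos n).ne'

section TriangularOnes

variable (R : Type*) [Ring R]

def lowerOnes (n k : ℕ) : R := if k ≤ n then 1 else 0

def backwardDiff (n k : ℕ) : R := (if n = k then 1 else 0) - (if n = k + 1 then 1 else 0)

variable {R}

theorem sum_backwardDiff_mul_lowerOnes (n m : ℕ) :
    ∑ j ∈ Finset.range (n + 1), backwardDiff R n j * lowerOnes R j m = if n = m then 1 else 0 := by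
  simp only [backwardDiff, sub_mul, ite_mul, one_mul, zero_mul, Finset.sum_sub_distrib,
    Finset.sum_ite_eq, Finset.mem_range, Nat.lt_succ_self, if_true]
  cases n with
  | zero => simp [lowerOnes, eq_comm]
  | succ n =>
    simp only [Nat.succ_inj, Finset.sum_ite_eq, Finset.mem_range, lowerOnes]
    split_ifs <;> first | omega | simp

theorem sum_lowerOnes_mul_backwardDiff (n m : ℕ) :
    ∑ j ∈ Finset.range (n + 1), lowerOnes R n j * backwardDiff R j m = if n = m then 1 else 0 := by
  rw [Finset.sum_congr rfl fun j hj => by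
    rw [lowerOnes, if_pos (Nat.lt_succ_iff.mp (Finset.mem_range.mp hj)), one_mul]]
  simp only [backwardDiff, Finset.sum_sub_distrib, Finset.sum_ite_eq', Finset.mem_range]
  split_ifs <;> first | omega | simp

end TriangularOnes

theorem Finset.sum_mul_div_mul_div_cancel {ι K : Type*} [Field K] (s : Finset ι)
    (a b : K) (u x y : ι → K) (hu : ∀ j ∈ s, u j ≠ 0) :
    ∑ j ∈ s, a * x j / u j * (u j * y j / b) = a / b * ∑ j ∈ s, x j * y j := by
  rw [Finset.mul_sum]
  refine Finset.sum_congr rfl fun j hj => ?_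
  field_simp [hu j hj]

theorem Fmat_eq (n k : ℕ) :
    Fmat n k = (fibo n * fibo (n + 1) : ℝ) * backwardDiff ℝ n k / (fibo (k + 1) : ℝ) ^ 2 := by
  have := fibo_cast_ne_zero
  unfold Fmat backwardDiff
  split_ifs <;> first | omega | simp
  all_goals subst_vars; field_simp

theorem Gmat_eq (n k : ℕ) :
    Gmat n k = (fibo (n + 1) : ℝ) ^ 2 * lowerOnes ℝ n k / (fibo k * fibo (k + 1) : ℝ) := by
  unfold Gmat lowerOnes
  split_ifs <;> simp

theorem Fmat_Gmat_inverse (n m : ℕ) :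
    (∑ j ∈ Finset.range (n + 1), Fmat n j * Gmat j m) = (if n = m then 1 else 0) ∧
    (∑ j ∈ Finset.range (n + 1), Gmat n j * Fmat j m) = (if n = m then 1 else 0) := by
  have scale_kronecker (a : ℕ → ℝ) (ha : ∀ k, a k ≠ 0) :
      a n / a m * (if n = m then 1 else 0) = if n = m then 1 else 0 := by
    split_ifs with h
    · rw [h, div_self (ha m), mul_one]
    · rw [mul_zero]
  constructor
  · simp only [Fmat_eq, Gmat_eq]
    rw [Finset.sum_mul_div_mul_div_cancel _ _ _ _ _ _ fun j _ => pow_ne_zero 2 (fibo_cast_ne_zero _),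
      sum_backwardDiff_mul_lowerOnes]
    exact scale_kronecker (fun k => fibo k * fibo (k + 1))
      fun k => mul_ne_zero (fibo_cast_ne_zero k) (fibo_cast_ne_zero (k + 1))
  · simp only [Fmat_eq, Gmat_eq]
    rw [Finset.sum_mul_div_mul_div_cancel _ _ _ _ _ _ fun j _ =>
      mul_ne_zero (fibo_cast_ne_zero j) (fibo_cast_ne_zero (j + 1)), sum_lowerOnes_mul_backwardDiff]
    exact scale_kronecker (fun k => (fibo (k + 1) : ℝ) ^ 2) fun k => pow_ne_zero 2 (fibo_cast_ne_zero _)
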